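/- For any invertible complex matrix $a \in \mathrm{GL}(d,\mathbb{C})$ and Hermitian positive definite matrices $p_1, p_2$, the Riemannian distance $\delta(p_1,p_2) = \lVert \mathrm{Log}(p_1^{-1/2} p_2 p_1^{-1/2}) \rVert_F$ is invariant under congruence: $\delta(a^* p_1 a, a^* p_2 a) = \delta(p_1, p_2)$. -/

import Mathlib

set_option maxHeartbeats 800000

open Matrix
open scoped ComplexOrder Classical

variable {d : ℕ}

/-- Frobenius norm of a complex matrix. -/
noncomputable def frob (A : Matrix (Fin d) (Fin d) ℂ) : ℝ :=
  Real.sqrt (∑ i, ∑ j, ‖A i j‖ ^ 2)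

/-- The unique positive semidefinite square root (junk value `0` if not PSD). -/

noncomputable def msqrt (A : Matrix (Fin d) (Fin d) ℂ) : Matrix (Fin d) (Fin d) ℂ :=
  if h : A.PosSemidef then
    (h.1.eigenvectorUnitary : Matrix (Fin d) (Fin d) ℂ) *
      Matrix.diagonal ((↑) ∘ (Real.sqrt ·) ∘ h.1.eigenvalues) *
      (star h.1.eigenvectorUnitary : Matrix (Fin d) (Fin d) ℂ)
  else 0

/-- Principal matrix logarithm of a Hermitian (positive definite) matrix, via the
spectral decomposition (junk value `0` otherwise). -/

noncomputable def mLog (A : Matrix (Fin d) (Fin d) ℂ) : Matrix (Fin d) (Fin d) ℂ :=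
  if h : A.IsHermitian then
    (h.eigenvectorUnitary : Matrix (Fin d) (Fin d) ℂ) *
      Matrix.diagonal (fun i => (Real.log (h.eigenvalues i) : ℂ)) *
      star (h.eigenvectorUnitary : Matrix (Fin d) (Fin d) ℂ)
  else 0

/-- Matrix exponential. -/
noncomputable def mExp (A : Matrix (Fin d) (Fin d) ℂ) : Matrix (Fin d) (Fin d) ℂ :=
  (NormedSpace.expSeries ℂ (Matrix (Fin d) (Fin d) ℂ)).sum A

/-- Real power of an HPD matrix: `X^t = Exp(t Log X)`. -/
noncomputable def mpow (A : Matrix (Fin d) (Fin d) ℂ) (t : ℝ) : Matrix (Fin d) (Fin d) ℂ :=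
  mExp ((t : ℂ) • mLog A)

/-- Affine-invariant Riemannian distance on HPD matrices. -/
noncomputable def rdist (p q : Matrix (Fin d) (Fin d) ℂ) : ℝ :=
  frob (mLog ((msqrt p)⁻¹ * q * (msqrt p)⁻¹))

/-- Geodesic midpoint of two HPD matrices. -/
noncomputable def mid (p q : Matrix (Fin d) (Fin d) ℂ) : Matrix (Fin d) (Fin d) ℂ :=
  msqrt p * msqrt ((msqrt p)⁻¹ * q * (msqrt p)⁻¹) * msqrt p

/-- Riemannian exponential map at `p`. -/
noncomputable def rExp (p h : Matrix (Fin d) (Fin d) ℂ) : Matrix (Fin d) (Fin d) ℂ :=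
  msqrt p * mExp ((msqrt p)⁻¹ * h * (msqrt p)⁻¹) * msqrt p

/-- Riemannian logarithm map at `p`. -/
noncomputable def rLog (p q : Matrix (Fin d) (Fin d) ℂ) : Matrix (Fin d) (Fin d) ℂ :=
  msqrt p * mLog ((msqrt p)⁻¹ * q * (msqrt p)⁻¹) * msqrt p

/-! With `s = √p₁` and `t = √(a* p₁ a)` we have `t² = a* s² a`, so `u = t⁻¹ a* s` is unitary, and
it intertwines the two whitenings: `t⁻¹ (a* q a) t⁻¹ = u (s⁻¹ q s⁻¹) u*`. The logarithm is a
continuous functional calculus, so it commutes with the star automorphism `x ↦ u x u*`, and the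
Frobenius norm is invariant under it. -/

theorem inv_mul_conjTranspose_mul_mem_unitary {n R : Type*} [Fintype n] [DecidableEq n]
    [CommRing R] [StarRing R] {s t a : Matrix n n R} (hs : s.IsHermitian)
    (ht : t.IsHermitian) (ht_det : IsUnit t.det) (hst : t * t = aᴴ * (s * s) * a) :
    t⁻¹ * aᴴ * s ∈ unitary (Matrix n n R) := by
  rw [← unitaryGroup, mem_unitaryGroup_iff, star_eq_conjTranspose,
    conjTranspose_mul, conjTranspose_mul, conjTranspose_nonsing_inv,
    hs.eq, ht.eq, conjTranspose_conjTranspose]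
  calc t⁻¹ * aᴴ * s * (s * (a * t⁻¹)) = t⁻¹ * (aᴴ * (s * s) * a) * t⁻¹ := by
        simp only [Matrix.mul_assoc]
    _ = 1 := by
      rw [← hst, Matrix.mul_assoc, mul_nonsing_inv_cancel_right _ _ ht_det,
        nonsing_inv_mul _ ht_det]

theorem msqrt_eq_cfc {A : Matrix (Fin d) (Fin d) ℂ} (hA : A.PosSemidef) :
    msqrt A = cfc Real.sqrt A := by
  rw [msqrt, dif_pos hA, hA.1.cfc_eq]
  rfl

theorem isHermitian_msqrt {A : Matrix (Fin d) (Fin d) ℂ} (hA : A.PosSemidef) :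
    (msqrt A).IsHermitian := by
  rw [msqrt_eq_cfc hA]
  exact cfc_predicate Real.sqrt A

theorem msqrt_mul_self {A : Matrix (Fin d) (Fin d) ℂ} (hA : A.PosSemidef) :
    msqrt A * msqrt A = A := by
  rw [msqrt_eq_cfc hA, ← cfc_mul Real.sqrt Real.sqrt A]
  conv_rhs => rw [← cfc_id ℝ A hA.1]
  refine cfc_congr fun x hx => Real.mul_self_sqrt ?_
  rw [hA.1.spectrum_real_eq_range_eigenvalues] at hx
  obtain ⟨i, rfl⟩ := hx
  exact hA.eigenvalues_nonneg i

theorem isUnit_det_msqrt {A : Matrix (Fin d) (Fin d) ℂ} (hA : A.PosDef) :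
    IsUnit (msqrt A).det := by
  have hsq : (msqrt A).det * (msqrt A).det = A.det := by
    rw [← det_mul, msqrt_mul_self hA.posSemidef]
  refine isUnit_of_mul_isUnit_left (y := (msqrt A).det) ?_
  rw [hsq, ← isUnit_iff_isUnit_det]
  exact hA.isUnit

theorem mLog_eq_cfc {M : Matrix (Fin d) (Fin d) ℂ} (hM : M.IsHermitian) :
    mLog M = cfc Real.log M := by
  rw [mLog, dif_pos hM, hM.cfc_eq]
  rfl

theorem mLog_unitary_conj {M u : Matrix (Fin d) (Fin d) ℂ} (hM : M.IsHermitian)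
    (hu : u ∈ unitary (Matrix (Fin d) (Fin d) ℂ)) :
    mLog (u * M * star u) = u * mLog M * star u := by
  set φ := Unitary.conjStarAlgAut ℂ _ ⟨u, hu⟩
  have hφ (X : Matrix (Fin d) (Fin d) ℂ) : φ X = u * X * star u :=
    Unitary.conjStarAlgAut_apply _ X
  have hφM : IsSelfAdjoint (φ M) := hM.isSelfAdjoint.map φ
  rw [← hφ, ← hφ, mLog_eq_cfc hM, mLog_eq_cfc hφM]
  refine (StarAlgHomClass.map_cfc (S := ℂ) φ Real.log M
    (finite_real_spectrum.continuousOn _) ?_ hM hφM).symm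
  rw [show ⇑φ = fun X => u * X * star u from funext hφ]
  fun_prop

theorem trace_conjTranspose_mul_self {m n : Type*} [Fintype m] [Fintype n]
    (X : Matrix m n ℂ) :
    (Xᴴ * X).trace = ((∑ i, ∑ j, ‖X i j‖ ^ 2 : ℝ) : ℂ) := by
  rw [Finset.sum_comm]
  push_cast
  refine Finset.sum_congr rfl fun j _ => ?_
  simp only [diag_apply, mul_apply, conjTranspose_apply, RCLike.star_def, Complex.conj_mul']

theorem frob_unitary_conj (X : Matrix (Fin d) (Fin d) ℂ) {u : Matrix (Fin d) (Fin d) ℂ}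
    (hu : u ∈ unitary (Matrix (Fin d) (Fin d) ℂ)) :
    frob (u * X * star u) = frob X := by
  have htrace : ((u * X * star u)ᴴ * (u * X * star u)).trace = (Xᴴ * X).trace := by
    rw [← star_eq_conjTranspose, star_mul, star_mul, star_star, star_eq_conjTranspose]
    have hcancel : u * (Xᴴ * star u) * (u * X * star u) = u * (Xᴴ * X) * star u := by
      simp only [Matrix.mul_assoc]
      rw [← Matrix.mul_assoc (star u) u, Unitary.star_mul_self_of_mem hu, one_mul]
    rw [hcancel, trace_mul_cycle, Unitary.star_mul_self_of_mem hu, one_mul]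
  rw [trace_conjTranspose_mul_self, trace_conjTranspose_mul_self, Complex.ofReal_inj] at htrace
  rw [frob, frob, htrace]

noncomputable def whiten (p q : Matrix (Fin d) (Fin d) ℂ) : Matrix (Fin d) (Fin d) ℂ :=
  (msqrt p)⁻¹ * q * (msqrt p)⁻¹

theorem rdist_eq_frob_mLog_whiten (p q : Matrix (Fin d) (Fin d) ℂ) :
    rdist p q = frob (mLog (whiten p q)) :=
  rfl

theorem isHermitian_whiten {p q : Matrix (Fin d) (Fin d) ℂ} (hp : p.PosSemidef)
    (hq : q.IsHermitian) : (whiten p q).IsHermitian := by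
  simpa only [whiten, conjTranspose_nonsing_inv, (isHermitian_msqrt hp).eq] using
    isHermitian_conjTranspose_mul_mul (msqrt p)⁻¹ hq

theorem exists_mem_unitary_whiten_congr {p a : Matrix (Fin d) (Fin d) ℂ} (hp : p.PosDef)
    (ha : IsUnit a) : ∃ u ∈ unitary (Matrix (Fin d) (Fin d) ℂ),
      ∀ q, whiten (aᴴ * p * a) (aᴴ * q * a) = u * whiten p q * star u := by
  have hp' : (aᴴ * p * a).PosDef :=
    hp.conjTranspose_mul_mul_same (mulVec_injective_of_isUnit ha)
  simp only [whiten]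
  set s := msqrt p
  set t := msqrt (aᴴ * p * a)
  have hs : s.IsHermitian := isHermitian_msqrt hp.posSemidef
  have ht : t.IsHermitian := isHermitian_msqrt hp'.posSemidef
  have hs_det : IsUnit s.det := isUnit_det_msqrt hp
  refine ⟨t⁻¹ * aᴴ * s, inv_mul_conjTranspose_mul_mem_unitary hs ht (isUnit_det_msqrt hp')
    (by rw [msqrt_mul_self hp.posSemidef, msqrt_mul_self hp'.posSemidef]), fun q => ?_⟩
  rw [star_eq_conjTranspose, conjTranspose_mul, conjTranspose_mul, conjTranspose_nonsing_inv,
    hs.eq, ht.eq, conjTranspose_conjTranspose]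
  simp only [Matrix.mul_assoc, mul_nonsing_inv_cancel_left _ _ hs_det,
    nonsing_inv_mul_cancel_left _ _ hs_det]

/-- the affine-invariant Riemannian distance on HPD matrices is invariant
under congruence transformation `x ↦ a⋆ x a` by any invertible matrix `a`. -/
theorem rdist_congruence_invariant {d : ℕ} (p₁ p₂ a : Matrix (Fin d) (Fin d) ℂ)
    (h₁ : p₁.PosDef) (h₂ : p₂.PosDef) (ha : IsUnit a) :
    rdist (aᴴ * p₁ * a) (aᴴ * p₂ * a) = rdist p₁ p₂ := by
  obtain ⟨u, hu, hwhiten⟩ := exists_mem_unitary_whiten_congr h₁ ha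
  rw [rdist_eq_frob_mLog_whiten, rdist_eq_frob_mLog_whiten, hwhiten,
    mLog_unitary_conj (isHermitian_whiten h₁.posSemidef h₂.1) hu, frob_unitary_conj _ hu]
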